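/- arXiv:2309.01556 — 2 statements merged into one kernel-verified Lean document; each statement's English description precedes it below -/
import Mathlib

section
/- Let A = {0,1}, let k be odd with k ≥ 1, and let n ≥ k+1. Then the Hamming distance between γ^{n,k}_{[0]} and ρ^{n,k}_{[2^n−1]} equals k+1, and the Hamming distance between ρ^{n,k}_{[0]} and γ^{n,k}_{[2^n−1]} equals k+1. -/
/-- Hamming distance between two words (lists) of the same length:
the number of positions in which they differ. -/
def hammingL {α : Type*} [DecidableEq α] (w w' : List α) : ℕ :=
  ((w.zip w').filter fun q => decide (q.1 ≠ q.2)).length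

/-- `w` (restricted to indices `< N`) is a `σ_k`-Gray cycle over `X`:
its terms are pairwise distinct and enumerate `X` (a bijection from `[0, N-1]` onto `X`),
two consecutive terms have the same length and Hamming distance exactly `k`, and so do
the first and the last term. -/
def IsGrayCycleOn {α : Type*} [DecidableEq α] (k N : ℕ) (w : ℕ → List α)
    (X : Set (List α)) : Prop :=
  Set.BijOn w (Set.Iio N) X ∧
  (∀ i, 1 ≤ i → i < N →
    (w (i - 1)).length = (w i).length ∧ hammingL (w (i - 1)) (w i) = k) ∧
  (0 < N → (w (N - 1)).length = (w 0).length ∧ hammingL (w (N - 1)) (w 0) = k)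

/-- The bit complement `θ : 0 ↔ 1` on the binary alphabet `{0,1}`. -/
def cpl (x : Fin 2) : Fin 2 := x + 1

/-- The bit complement extended letterwise to binary words. -/
def cplW (w : List (Fin 2)) : List (Fin 2) := w.map cpl

/-- The reflected binary Gray code `g^{m,1}` over words of length `m`:
`g^{0,1} = (ε)` and `g^{m+1,1} = (0·g^{m,1}, 1·(g^{m,1})^R)`. -/
def binGray : ℕ → List (List (Fin 2))
  | 0 => [[]]
  | m + 1 =>
      (binGray m).map (fun w => 0 :: w) ++ (binGray m).reverse.map (fun w => 1 :: w)

/-- The sequence `γ^{n0,1}`: `γ^{n0,1}_{[0]} = g^{n0,1}_{[0]}` and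
`γ^{n0,1}_{[i]} = g^{n0,1}_{[2^{n0} - i]}` for `1 ≤ i ≤ 2^{n0} - 1`. -/
def gamma1 (n0 i : ℕ) : List (Fin 2) :=
  if i = 0 then (binGray n0).getD 0 [] else (binGray n0).getD (2 ^ n0 - i) []

/-- The sequence `ρ^{n0,1}`: `ρ^{n0,1}_{[0]} = g^{n0,1}_{[2^{n0}-1]}` and
`ρ^{n0,1}_{[i]} = g^{n0,1}_{[i-1]}` for `1 ≤ i ≤ 2^{n0} - 1`. -/
def rho1 (n0 i : ℕ) : List (Fin 2) :=
  if i = 0 then (binGray n0).getD (2 ^ n0 - 1) [] else (binGray n0).getD (i - 1) []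

/-- `grSeq n0 true t i` (resp. `grSeq n0 false t i`) is the term of index `i` of the
sequence `γ^{n0+2t, 2t+1}` (resp. `ρ^{n0+2t, 2t+1}`), built inductively: the base cases
are `γ^{n0,1}` and `ρ^{n0,1}`, and, writing `i = q·2^m + r` with `m = n0 + 2t` and
`r < 2^m`, `γ^{m+2, (2t+1)+2}_{[i]}` is `θ^r(00)·γ^{m,2t+1}_{[r]}`, `θ^r(01)·ρ^{m,2t+1}_{[r]}`,
`θ^r(11)·γ^{m,2t+1}_{[r]}`, `θ^r(10)·ρ^{m,2t+1}_{[r]}` according to `q = 0, 1, 2, 3`, and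
`ρ^{m+2, (2t+1)+2}_{[i]}` is `θ^r(10)·γ^{m,2t+1}_{[r]}`, `θ^r(11)·ρ^{m,2t+1}_{[r]}`,
`θ^r(01)·γ^{m,2t+1}_{[r]}`, `θ^r(00)·ρ^{m,2t+1}_{[r]}` according to `q = 0, 1, 2, 3`. -/
def grSeq (n0 : ℕ) : Bool → ℕ → ℕ → List (Fin 2)
  | b, 0, i => if b then gamma1 n0 i else rho1 n0 i
  | b, t + 1, i =>
      cplW^[i % 2 ^ (n0 + 2 * t)]
        (if b then
          (if i / 2 ^ (n0 + 2 * t) = 0 then [0, 0]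
           else if i / 2 ^ (n0 + 2 * t) = 1 then [0, 1]
           else if i / 2 ^ (n0 + 2 * t) = 2 then [1, 1] else [1, 0])
         else
          (if i / 2 ^ (n0 + 2 * t) = 0 then [1, 0]
           else if i / 2 ^ (n0 + 2 * t) = 1 then [1, 1]
           else if i / 2 ^ (n0 + 2 * t) = 2 then [0, 1] else [0, 0])) ++
        grSeq n0 (i / 2 ^ (n0 + 2 * t) % 2 == 0) t (i % 2 ^ (n0 + 2 * t))

/-- For odd `k` and `n ≥ k + 1`, `gammaNK n k i` is the term `γ^{n,k}_{[i]}`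
(here `n0 = n - k + 1` and `k = 2·(k/2) + 1`). -/
def gammaNK (n k i : ℕ) : List (Fin 2) := grSeq (n + 1 - k) true (k / 2) i

/-- For odd `k` and `n ≥ k + 1`, `rhoNK n k i` is the term `ρ^{n,k}_{[i]}`. -/
def rhoNK (n k i : ℕ) : List (Fin 2) := grSeq (n + 1 - k) false (k / 2) i

/-! At each level the construction prepends two letters. At index `0` these are `00` (for `γ`) and
`10` (for `ρ`), followed by `γ_{[0]}` of the previous level; at the last index the offset
`r = 2^{n-2} - 1` is odd, so the prefixes are complemented to `01` (for `γ`) and `11` (for `ρ`),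
followed by `ρ_{[last]}` of the previous level. Hence each level adds exactly `2` to both
distances. For `k = 1` the four words are `g_{[0]} = 0⋯0`, `g_{[2^{n0}-2]} = 10⋯01`,
`g_{[2^{n0}-1]} = 10⋯0` and `g_{[1]} = 0⋯01`, at distance `2`. -/

theorem hammingL_append {α : Type*} [DecidableEq α] {a c : List α} (h : a.length = c.length)
    (b d : List α) : hammingL (a ++ b) (c ++ d) = hammingL a c + hammingL b d := by
  simp only [hammingL, List.zip_append h, List.filter_append, List.length_append]

theorem hammingL_cons {α : Type*} [DecidableEq α] (a b : α) (l l' : List α) :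
    hammingL (a :: l) (b :: l') = (if a = b then 0 else 1) + hammingL l l' := by
  by_cases h : a = b <;> simp [hammingL, h, add_comm]

@[simp]
theorem hammingL_self {α : Type*} [DecidableEq α] (l : List α) : hammingL l l = 0 := by
  induction l with
  | nil => rfl
  | cons a l ih => simp [hammingL_cons, ih]

theorem cplW_involutive : Function.Involutive cplW := fun w => by
  rw [cplW, cplW, List.map_map]
  exact List.map_id'' (fun x => by fin_cases x <;> rfl) w

theorem length_binGray (m : ℕ) : (binGray m).length = 2 ^ m := by
  induction m with
  | zero => rfl
  | succ m ih => simp [binGray, ih, pow_succ, mul_two]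

theorem binGray_succ_getD_of_lt {m i : ℕ} (hi : i < 2 ^ m) :
    (binGray (m + 1)).getD i [] = 0 :: (binGray m).getD i [] := by
  simp [binGray, List.getD_eq_getElem?_getD, List.getElem?_append_left, length_binGray, hi]

theorem binGray_succ_getD_reflect {m i : ℕ} (hi : i < 2 ^ m) :
    (binGray (m + 1)).getD (2 ^ (m + 1) - 1 - i) [] = 1 :: (binGray m).getD i [] := by
  have hle : (List.map (fun w => 0 :: w) (binGray m)).length ≤ 2 ^ (m + 1) - 1 - i := by
    simp only [List.length_map, length_binGray, pow_succ]; omega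
  rw [binGray, List.getD_eq_getElem?_getD, List.getElem?_append_right hle, List.getElem?_map,
    List.getElem?_reverse (by simp only [List.length_map, length_binGray, pow_succ]; omega)]
  have hidx : 2 ^ m - 1 - (2 ^ (m + 1) - 1 - i - 2 ^ m) = i := by rw [pow_succ]; omega
  simp [length_binGray, List.getD_eq_getElem?_getD, hidx, hi]

theorem binGray_getD_zero (m : ℕ) : (binGray m).getD 0 [] = List.replicate m 0 := by
  induction m with
  | zero => rfl
  | succ m ih => rw [binGray_succ_getD_of_lt (by positivity), ih, List.replicate_succ]

theorem binGray_getD_last (m : ℕ) :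
    (binGray (m + 1)).getD (2 ^ (m + 1) - 1) [] = 1 :: List.replicate m 0 := by
  simpa only [Nat.sub_zero, binGray_getD_zero] using
    binGray_succ_getD_reflect (m := m) (i := 0) (by positivity)

theorem binGray_getD_one (m : ℕ) :
    (binGray (m + 1)).getD 1 [] = List.replicate m 0 ++ [1] := by
  induction m with
  | zero => rfl
  | succ m ih =>
    rw [binGray_succ_getD_of_lt (Nat.one_lt_two_pow (by omega)), ih, List.replicate_succ,
      List.cons_append]

theorem binGray_getD_last_pred (m : ℕ) :
    (binGray (m + 2)).getD (2 ^ (m + 2) - 2) [] = 1 :: (List.replicate m 0 ++ [1]) := by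
  rw [← binGray_getD_one, ← binGray_succ_getD_reflect (Nat.one_lt_two_pow (by omega))]
  rfl

theorem hammingL_gamma1_zero_rho1_last (m : ℕ) :
    hammingL (gamma1 (m + 2) 0) (rho1 (m + 2) (2 ^ (m + 2) - 1)) = 2 := by
  have hne : 2 ^ (m + 2) - 1 ≠ 0 := by have := Nat.one_lt_two_pow (n := m + 2) (by omega); omega
  have hidx : 2 ^ (m + 2) - 1 - 1 = 2 ^ (m + 2) - 2 := by omega
  simp only [gamma1, rho1, if_pos, if_neg hne, hidx, binGray_getD_zero, binGray_getD_last_pred]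
  rw [List.replicate_succ, List.replicate_succ', hammingL_cons, hammingL_append (by simp)]
  simp [hammingL]

theorem hammingL_rho1_zero_gamma1_last (m : ℕ) :
    hammingL (rho1 (m + 2) 0) (gamma1 (m + 2) (2 ^ (m + 2) - 1)) = 2 := by
  have hne : 2 ^ (m + 2) - 1 ≠ 0 := by have := Nat.one_lt_two_pow (n := m + 2) (by omega); omega
  have hidx : 2 ^ (m + 2) - (2 ^ (m + 2) - 1) = 1 := by omega
  simp only [gamma1, rho1, if_pos, if_neg hne, hidx, binGray_getD_last, binGray_getD_one]
  nth_rw 1 [List.replicate_succ']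
  rw [List.replicate_succ, List.cons_append, hammingL_cons, hammingL_append (by simp)]
  simp [hammingL]

theorem grSeq_succ_zero (n0 t : ℕ) (b : Bool) :
    grSeq n0 b (t + 1) 0 = (if b then [0, 0] else [1, 0]) ++ grSeq n0 true t 0 := by
  cases b <;> simp [grSeq]

theorem grSeq_succ_last {n0 : ℕ} (hn0 : 1 ≤ n0) (t : ℕ) (b : Bool) :
    grSeq n0 b (t + 1) (2 ^ (n0 + 2 * (t + 1)) - 1) =
      (if b then [0, 1] else [1, 1]) ++ grSeq n0 false t (2 ^ (n0 + 2 * t) - 1) := by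
  set N := 2 ^ (n0 + 2 * t)
  have hN : 2 ≤ N := Nat.one_lt_two_pow (by omega)
  have hsplit : 2 ^ (n0 + 2 * (t + 1)) - 1 = N * 3 + (N - 1) := by
    rw [show n0 + 2 * (t + 1) = n0 + 2 * t + 2 by ring, pow_add]; omega
  have hdiv : (2 ^ (n0 + 2 * (t + 1)) - 1) / N = 3 := by
    rw [hsplit, Nat.mul_add_div (by omega), Nat.div_eq_of_lt (by omega)]
  have hmod : (2 ^ (n0 + 2 * (t + 1)) - 1) % N = N - 1 := by
    rw [hsplit, Nat.mul_add_mod, Nat.mod_eq_of_lt (by omega)]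
  have hodd : Odd (N - 1) :=
    Nat.Even.sub_odd (by omega) (Nat.even_pow.mpr ⟨even_two, by omega⟩) odd_one
  rw [grSeq, hdiv, hmod, cplW_involutive.iterate_odd hodd]
  cases b <;> rfl

theorem hammingL_grSeq_true_zero_false_last {n0 : ℕ} (hn0 : 2 ≤ n0) (t : ℕ) :
    hammingL (grSeq n0 true t 0) (grSeq n0 false t (2 ^ (n0 + 2 * t) - 1)) = 2 * t + 2 := by
  obtain ⟨m, rfl⟩ := Nat.exists_eq_add_of_le' hn0
  induction t with
  | zero => exact hammingL_gamma1_zero_rho1_last m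
  | succ t ih =>
    rw [grSeq_succ_zero, grSeq_succ_last (by omega), if_pos rfl, if_neg Bool.false_ne_true,
      hammingL_append (by rfl), ih]
    show 2 + (2 * t + 2) = 2 * (t + 1) + 2
    ring

theorem hammingL_grSeq_false_zero_true_last {n0 : ℕ} (hn0 : 2 ≤ n0) (t : ℕ) :
    hammingL (grSeq n0 false t 0) (grSeq n0 true t (2 ^ (n0 + 2 * t) - 1)) = 2 * t + 2 := by
  obtain ⟨m, rfl⟩ := Nat.exists_eq_add_of_le' hn0
  cases t with
  | zero => exact hammingL_rho1_zero_gamma1_last m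
  | succ t =>
    rw [grSeq_succ_zero, grSeq_succ_last (by omega), if_pos rfl, if_neg Bool.false_ne_true,
      hammingL_append (by rfl), hammingL_grSeq_true_zero_false_last hn0]
    show 2 + (2 * t + 2) = 2 * (t + 1) + 2
    ring

theorem statement6_general (n k : ℕ) (hk : Odd k) (hn : k + 1 ≤ n) :
    hammingL (gammaNK n k 0) (rhoNK n k (2 ^ n - 1)) = k + 1 ∧
    hammingL (rhoNK n k 0) (gammaNK n k (2 ^ n - 1)) = k + 1 := by
  obtain ⟨t, rfl⟩ := hk
  obtain ⟨n0, rfl⟩ : ∃ n0, n = n0 + 2 * t := ⟨n - 2 * t, by omega⟩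
  have hn0 : 2 ≤ n0 := by omega
  have hstart : n0 + 2 * t + 1 - (2 * t + 1) = n0 := by omega
  have ht : (2 * t + 1) / 2 = t := by omega
  simp only [gammaNK, rhoNK, hstart, ht]
  exact ⟨hammingL_grSeq_true_zero_false_last hn0 t, hammingL_grSeq_false_zero_true_last hn0 t⟩

/-- For `k` odd with `k ≥ 1` and `n ≥ k + 1`, the Hamming distance between
`γ^{n,k}_{[0]}` and `ρ^{n,k}_{[2^n - 1]}` equals `k + 1`, and the Hamming distance
between `ρ^{n,k}_{[0]}` and `γ^{n,k}_{[2^n - 1]}` equals `k + 1`. -/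
theorem statement6 (n k : ℕ) (hk1 : 1 ≤ k) (hk : Odd k) (hn : k + 1 ≤ n) :
    hammingL (gammaNK n k 0) (rhoNK n k (2 ^ n - 1)) = k + 1 ∧
    hammingL (rhoNK n k 0) (gammaNK n k (2 ^ n - 1)) = k + 1 :=
  statement6_general n k hk hn
end

section
/- Let A = {0,1}, k = 2k'+1 odd, n ≥ k+1, n0 = n−k+1, and J = {n0, n0+2, …, n−2, n}. (i) For every j ∈ J with j ≠ n0, the sequence (C^{[j]}_{[i]})_{0 ≤ i ≤ 2^n−1} is 2^{j+1}-periodic. (ii) For every i ∈ [0, 2^n−1], C^{[n0]}_{[i]} = γ^{n0,1}_{[μ(i,n0)]} if μ(i,n0) ∈ [0, 2^{n0}−1], and C^{[n0]}_{[i]} = ρ^{n0,1}_{[μ(i,n0)−2^{n0}]} if μ(i,n0) ∈ [2^{n0}, 2^{n0+1}−1]. (iii) For every i ∈ [0, 2^n−1] and every j ∈ J with j ≠ n0, C^{[j]}_{[i]} equals the prefix of length 2 of γ^{j, k−n+j}_{[μ(i,j)]} if μ(i,j) ∈ [0, 2^j−1], and the prefix of length 2 of ρ^{j, k−n+j}_{[μ(i,j)−2^j]}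 if μ(i,j) ∈ [2^j, 2^{j+1}−1]. -/
/-! Dropping the two leading letters of `γ^{m+2,k+2}_{[i]}` or `ρ^{m+2,k+2}_{[i]}` leaves
`γ^{m,k}_{[r]}` or `ρ^{m,k}_{[r]}` with `r = i mod 2^m`, the choice being made by bit `m` of `i`:
this is the term of index `i` of the concatenation `γ^{m,k} ρ^{m,k}` read with period `2^{m+1}`.
Iterating, the suffix of length `j` of `γ^{n,k}_{[i]}` is the term of index `μ(i,j)` of
`γ^{j,·} ρ^{j,·}`, and all three claims are read off from this. -/

/-- The concatenation `γ^{m,2s+1} ρ^{m,2s+1}` (with `m = n0 + 2s`), read cyclically: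
its term of index `x` is taken at `x mod 2^{m+1}`. -/
def gammaRho (n0 s x : ℕ) : List (Fin 2) :=
  grSeq n0 (x / 2 ^ (n0 + 2 * s) % 2 == 0) s (x % 2 ^ (n0 + 2 * s))

lemma length_cplW_iterate (r : ℕ) (w : List (Fin 2)) : (cplW^[r] w).length = w.length := by
  induction r with
  | zero => rfl
  | succ r ih => rw [Function.iterate_succ_apply', cplW, List.length_map, ih]

lemma drop_two_grSeq_succ (n0 : ℕ) (b : Bool) (t i : ℕ) :
    (grSeq n0 b (t + 1) i).drop 2 = gammaRho n0 t i := by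
  rw [grSeq, gammaRho]
  apply List.drop_left'
  rw [length_cplW_iterate]
  split_ifs <;> rfl

lemma gammaRho_mod_two_pow (n0 s i : ℕ) {M : ℕ} (hM : n0 + 2 * s < M) :
    gammaRho n0 s (i % 2 ^ M) = gammaRho n0 s i := by
  obtain ⟨d, rfl⟩ : ∃ d, M = n0 + 2 * s + 1 + d := ⟨M - (n0 + 2 * s + 1), by omega⟩
  have hdiv :
      i % 2 ^ (n0 + 2 * s + 1 + d) / 2 ^ (n0 + 2 * s) % 2 = i / 2 ^ (n0 + 2 * s) % 2 := by
    rw [pow_add, pow_succ, mul_assoc, Nat.mod_mul_right_div_self,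
      Nat.mod_mod_of_dvd _ (dvd_mul_right 2 _)]
  have hmod : i % 2 ^ (n0 + 2 * s + 1 + d) % 2 ^ (n0 + 2 * s) = i % 2 ^ (n0 + 2 * s) :=
    Nat.mod_mod_of_dvd i (pow_dvd_pow 2 (by omega))
  rw [gammaRho, gammaRho, hdiv, hmod]

lemma gammaRho_add_two_pow (n0 s i : ℕ) :
    gammaRho n0 s (i + 2 ^ (n0 + 2 * s + 1)) = gammaRho n0 s i := by
  rw [← gammaRho_mod_two_pow n0 s _ (Nat.lt_succ_self _), Nat.add_mod_right,
    gammaRho_mod_two_pow n0 s _ (Nat.lt_succ_self _)]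

lemma gammaRho_of_lt (n0 s : ℕ) {x : ℕ} (hx : x < 2 ^ (n0 + 2 * s)) :
    gammaRho n0 s x = grSeq n0 true s x := by
  rw [gammaRho, Nat.div_eq_of_lt hx, Nat.mod_eq_of_lt hx]
  rfl

lemma gammaRho_of_le_of_lt (n0 s : ℕ) {x : ℕ} (hx₁ : 2 ^ (n0 + 2 * s) ≤ x)
    (hx₂ : x < 2 ^ (n0 + 2 * s + 1)) :
    gammaRho n0 s x = grSeq n0 false s (x - 2 ^ (n0 + 2 * s)) := by
  rw [pow_succ] at hx₂
  rw [gammaRho, Nat.div_eq_of_lt_le (k := 1) (by omega) (by omega),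
    Nat.mod_eq_sub_mod hx₁, Nat.mod_eq_of_lt (a := x - _) (by omega)]
  rfl

lemma drop_grSeq (n0 : ℕ) {s t : ℕ} (hst : s < t) (b : Bool) (i : ℕ) :
    (grSeq n0 b t i).drop (2 * (t - s)) = gammaRho n0 s i := by
  induction t generalizing b i with
  | zero => omega
  | succ t ih =>
    rw [show 2 * (t + 1 - s) = 2 + 2 * (t - s) by omega, ← List.drop_drop,
      drop_two_grSeq_succ]
    rcases Nat.lt_or_ge s t with hst' | hst'
    · rw [gammaRho, ih hst', gammaRho_mod_two_pow n0 s i (by omega)]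
    · obtain rfl : s = t := by omega
      simp

lemma drop_grSeq_true (n0 : ℕ) {s t i : ℕ} (hst : s ≤ t) (hi : i < 2 ^ (n0 + 2 * t)) :
    (grSeq n0 true t i).drop (2 * (t - s)) = gammaRho n0 s i := by
  rcases hst.lt_or_eq with hst | rfl
  · exact drop_grSeq n0 hst true i
  · simp [gammaRho_of_lt n0 s hi]

lemma gammaRho_eq_gamma_or_rho (n0 s i : ℕ) :
    (i % 2 ^ (n0 + 2 * s + 1) < 2 ^ (n0 + 2 * s) →
      gammaRho n0 s i = grSeq n0 true s (i % 2 ^ (n0 + 2 * s + 1))) ∧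
    (2 ^ (n0 + 2 * s) ≤ i % 2 ^ (n0 + 2 * s + 1) →
      gammaRho n0 s i = grSeq n0 false s (i % 2 ^ (n0 + 2 * s + 1) - 2 ^ (n0 + 2 * s))) := by
  rw [← gammaRho_mod_two_pow n0 s i (Nat.lt_succ_self _)]
  exact ⟨gammaRho_of_lt n0 s,
    fun h => gammaRho_of_le_of_lt n0 s h (Nat.mod_lt _ (Nat.two_pow_pos _))⟩

theorem statement9_general (n k : ℕ) (hk : Odd k) (hn : k + 1 ≤ n) :
    (∀ j, n - k + 1 < j → j ≤ n → (j - (n - k + 1)) % 2 = 0 →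
      ∀ i, i + 2 ^ (j + 1) ≤ 2 ^ n - 1 →
        ((gammaNK n k (i + 2 ^ (j + 1))).drop (n - j)).take 2 =
          ((gammaNK n k i).drop (n - j)).take 2) ∧
    (∀ i < 2 ^ n,
      (i % 2 ^ (n - k + 2) < 2 ^ (n - k + 1) →
        (gammaNK n k i).drop (k - 1) = gamma1 (n - k + 1) (i % 2 ^ (n - k + 2))) ∧
      (2 ^ (n - k + 1) ≤ i % 2 ^ (n - k + 2) →
        (gammaNK n k i).drop (k - 1) =
          rho1 (n - k + 1) (i % 2 ^ (n - k + 2) - 2 ^ (n - k + 1)))) ∧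
    (∀ j, n - k + 1 < j → j ≤ n → (j - (n - k + 1)) % 2 = 0 → ∀ i < 2 ^ n,
      (i % 2 ^ (j + 1) < 2 ^ j →
        ((gammaNK n k i).drop (n - j)).take 2 =
          (gammaNK j (k + j - n) (i % 2 ^ (j + 1))).take 2) ∧
      (2 ^ j ≤ i % 2 ^ (j + 1) →
        ((gammaNK n k i).drop (n - j)).take 2 =
          (rhoNK j (k + j - n) (i % 2 ^ (j + 1) - 2 ^ j)).take 2)) := by
  obtain ⟨t, rfl⟩ := hk
  set n0 := n - (2 * t + 1) + 1
  have hn0 : n = n0 + 2 * t := by omega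
  have hgamma : ∀ i, gammaNK n (2 * t + 1) i = grSeq n0 true t i := fun i => by
    rw [gammaNK, show n + 1 - (2 * t + 1) = n0 by omega, show (2 * t + 1) / 2 = t by omega]
  have hdrop : ∀ s ≤ t, ∀ i < 2 ^ n,
      (gammaNK n (2 * t + 1) i).drop (2 * (t - s)) = gammaRho n0 s i := fun s hs i hi => by
    rw [hgamma, drop_grSeq_true n0 hs (hn0 ▸ hi)]
  refine ⟨fun j _ hj hj' i hi => ?_, fun i hi => ?_, fun j _ hj hj' i hi => ?_⟩
  · obtain ⟨s, rfl⟩ : ∃ s, j = n0 + 2 * s := ⟨(j - n0) / 2, by omega⟩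
    have hpos := Nat.two_pow_pos (n0 + 2 * s + 1)
    rw [show n - (n0 + 2 * s) = 2 * (t - s) by omega, hdrop s (by omega) _ (by omega),
      hdrop s (by omega) i (by omega), gammaRho_add_two_pow]
  · rw [show 2 * t + 1 - 1 = 2 * (t - 0) by omega, hdrop 0 (Nat.zero_le _) i hi]
    exact gammaRho_eq_gamma_or_rho n0 0 i
  · obtain ⟨s, rfl⟩ : ∃ s, j = n0 + 2 * s := ⟨(j - n0) / 2, by omega⟩
    have hsub : ∀ b x, grSeq (n0 + 2 * s + 1 - (2 * t + 1 + (n0 + 2 * s) - n))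
        b ((2 * t + 1 + (n0 + 2 * s) - n) / 2) x = grSeq n0 b s x := fun b x => by
      rw [show n0 + 2 * s + 1 - (2 * t + 1 + (n0 + 2 * s) - n) = n0 by omega,
        show (2 * t + 1 + (n0 + 2 * s) - n) / 2 = s by omega]
    rw [show n - (n0 + 2 * s) = 2 * (t - s) by omega, hdrop s (by omega) i hi,
      gammaNK, rhoNK, hsub, hsub]
    exact (gammaRho_eq_gamma_or_rho n0 s i).imp (congrArg (List.take 2) ∘ ·)
      (congrArg (List.take 2) ∘ ·)

/-- Let `k` be odd, `n ≥ k + 1`, `n0 = n - k + 1`, and `J = {n0, n0+2, …, n-2, n}`.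
For `j ∈ J` with `j ≠ n0`, `C^{[j]}_{[i]}` is the two-letter factor of `γ^{n,k}_{[i]}`
occupying positions `j` and `j-1` from the right (i.e. `take 2` of `drop (n - j)`), and
`C^{[n0]}_{[i]}` is the suffix of length `n0` (i.e. `drop (k - 1)`); `μ(i,j) = i mod 2^{j+1}`.
(i) For `j ∈ J`, `j ≠ n0`, the sequence `(C^{[j]}_{[i]})_{0 ≤ i ≤ 2^n-1}` is
`2^{j+1}`-periodic. (ii) `C^{[n0]}_{[i]} = γ^{n0,1}_{[μ(i,n0)]}` if `μ(i,n0) < 2^{n0}`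
and `= ρ^{n0,1}_{[μ(i,n0)-2^{n0}]}` otherwise. (iii) For `j ∈ J`, `j ≠ n0`,
`C^{[j]}_{[i]}` is the prefix of length 2 of `γ^{j,k-n+j}_{[μ(i,j)]}` if `μ(i,j) < 2^j`,
and of `ρ^{j,k-n+j}_{[μ(i,j)-2^j]}` otherwise. -/
theorem statement9 (n k : ℕ) (hk1 : 1 ≤ k) (hk : Odd k) (hn : k + 1 ≤ n) :
    (∀ j, n - k + 1 < j → j ≤ n → (j - (n - k + 1)) % 2 = 0 →
      ∀ i, i + 2 ^ (j + 1) ≤ 2 ^ n - 1 →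
        ((gammaNK n k (i + 2 ^ (j + 1))).drop (n - j)).take 2 =
          ((gammaNK n k i).drop (n - j)).take 2) ∧
    (∀ i < 2 ^ n,
      (i % 2 ^ (n - k + 2) < 2 ^ (n - k + 1) →
        (gammaNK n k i).drop (k - 1) = gamma1 (n - k + 1) (i % 2 ^ (n - k + 2))) ∧
      (2 ^ (n - k + 1) ≤ i % 2 ^ (n - k + 2) →
        (gammaNK n k i).drop (k - 1) =
          rho1 (n - k + 1) (i % 2 ^ (n - k + 2) - 2 ^ (n - k + 1)))) ∧
    (∀ j, n - k + 1 < j → j ≤ n → (j - (n - k + 1)) % 2 = 0 → ∀ i < 2 ^ n,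
      (i % 2 ^ (j + 1) < 2 ^ j →
        ((gammaNK n k i).drop (n - j)).take 2 =
          (gammaNK j (k + j - n) (i % 2 ^ (j + 1))).take 2) ∧
      (2 ^ j ≤ i % 2 ^ (j + 1) →
        ((gammaNK n k i).drop (n - j)).take 2 =
          (rhoNK j (k + j - n) (i % 2 ^ (j + 1) - 2 ^ j)).take 2)) :=
  statement9_general n k hk hn
end
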